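/- For finite-horizon Markov Games: if π^E is a weak Dominant Strategy Equilibrium and the learned product policy π has time-uniform BC error ε_BC, then NashGap(π) ≤ 2n·ε_BC·H². -/

import Mathlib

open scoped BigOperators

namespace FH

/-- Finite-horizon `n`-player Markov Game with horizon `H` and time-dependent
rewards. -/
structure Game (n : ℕ) (S : Type) (A : Fin n → Type) [Fintype S] [∀ i, Fintype (A i)] where
  P : S → (∀ i, A i) → S → ℝ
  r : Fin n → ℕ → S → (∀ i, A i) → ℝ
  ν₀ : S → ℝ
  H : ℕ

variable {n : ℕ} {S : Type} {A : Fin n → Type} [Fintype S] [∀ i, Fintype (A i)]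

/-- A non-stationary policy: a distribution over actions at each time and state. -/
def IsPol {B : Type} [Fintype B] (π : ℕ → S → B → ℝ) : Prop :=
  (∀ t s b, 0 ≤ π t s b) ∧ ∀ t s, ∑ b, π t s b = 1

/-- Validity of the game data: `ν₀` a distribution, `P` a kernel, rewards in `[-1,1]`. -/
def IsGame (G : Game n S A) : Prop :=
  (∀ s, 0 ≤ G.ν₀ s) ∧ (∑ s, G.ν₀ s = 1) ∧
    (∀ s a, (∀ s', 0 ≤ G.P s a s') ∧ ∑ s', G.P s a s' = 1) ∧
    (∀ i t s a, |G.r i t s a| ≤ 1)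

/-- Joint (product) non-stationary policy. -/
def joint (π : ∀ i, ℕ → S → A i → ℝ) : ℕ → S → (∀ i, A i) → ℝ :=
  fun t s a => ∏ i, π i t s (a i)

/-- `stateDist G π t s = P(s_t = s)` (the time-`t` state visitation, `μ^t_π`). -/
def stateDist (G : Game n S A) (π : ℕ → S → (∀ i, A i) → ℝ) : ℕ → S → ℝ
  | 0 => G.ν₀
  | t + 1 => fun s' => ∑ s : S, ∑ a : (∀ i, A i), stateDist G π t s * π t s a * G.P s a s'

/-- Value-to-go with `k` remaining steps starting at time `t` in state `s`. -/
def Vaux (G : Game n S A) (i : Fin n) (π : ℕ → S → (∀ i, A i) → ℝ) :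
    ℕ → ℕ → S → ℝ
  | 0, _, _ => 0
  | k + 1, t, s => ∑ a : (∀ i, A i), π t s a *
      (G.r i t s a + ∑ s' : S, G.P s a s' * Vaux G i π k (t + 1) s')

/-- `V_{i,t}^π(s)`: expected cumulative reward from time `t` to `H-1` given `s_t = s`. -/
def Vt (G : Game n S A) (i : Fin n) (π : ℕ → S → (∀ i, A i) → ℝ)
    (t : ℕ) (s : S) : ℝ :=
  Vaux G i π (G.H - t) t s

/-- `V_i^π(ν₀)`. -/
def value (G : Game n S A) (i : Fin n) (π : ℕ → S → (∀ i, A i) → ℝ) : ℝ :=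
  ∑ s : S, G.ν₀ s * Vt G i π 0 s

/-- `Q_{i,t}^π(s,a) = r_i^t(s,a) + ∑_{s'} P(s'|s,a) V_{i,t+1}^π(s')`. -/
def Qt (G : Game n S A) (i : Fin n) (π : ℕ → S → (∀ i, A i) → ℝ)
    (t : ℕ) (s : S) (a : ∀ i, A i) : ℝ :=
  G.r i t s a + ∑ s' : S, G.P s a s' * Vt G i π (t + 1) s'

/-- Unilateral deviation of player `i` to `πi'`. -/
def dev (π : ∀ i, ℕ → S → A i → ℝ) (i : Fin n) (πi' : ℕ → S → A i → ℝ) :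
    ∀ j, ℕ → S → A j → ℝ :=
  Function.update π i πi'

/-- Time-`t` behavioral cloning error of player `i`:
`E_{s ∼ μ^t_{π^E}} ‖π_{i,t}(·|s) − π^E_{i,t}(·|s)‖₁`. -/
def bcErrT (G : Game n S A) (πE π : ∀ i, ℕ → S → A i → ℝ)
    (i : Fin n) (t : ℕ) : ℝ :=
  ∑ s : S, stateDist G (joint πE) t s * ∑ b : A i, |π i t s b - πE i t s b|

end FH

/-!
Dominance of `πE i` lets player `i` switch from any deviation `πi'` to the expert's policy without
loss, so the gain of the deviation is at most `V_i(πE_i, π₋ᵢ) − V_i(π)`, and it suffices to compare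
both product policies with `πE`. The performance difference lemma, taken along the expert's state
distribution and combined with `|Q_t| ≤ H`, gives `|V(ρ) − V(πE)| ≤ H ∑_{t<H} E_{μ^t_{πE}} ‖ρ_t − πE_t‖₁`.
The `ℓ¹` distance between two product distributions is at most the sum of the distances between
their factors, so each step contributes at most `n ε_BC`, hence `n ε_BC H²` for each comparison.
-/

open Function

lemma abs_sum_mul_le_of_sum_eq_one {κ : Type*} [Fintype κ] {w f : κ → ℝ} {c : ℝ}
    (hw0 : ∀ k, 0 ≤ w k) (hw1 : ∑ k, w k = 1) (hf : ∀ k, |f k| ≤ c) :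
    |∑ k, w k * f k| ≤ c :=
  calc |∑ k, w k * f k| ≤ ∑ k, w k * c := by
        refine (Finset.abs_sum_le_sum_abs _ _).trans (Finset.sum_le_sum fun k _ => ?_)
        rw [abs_mul, abs_of_nonneg (hw0 k)]
        exact mul_le_mul_of_nonneg_left (hf k) (hw0 k)
    _ = c := by rw [← Finset.sum_mul, hw1, one_mul]

section ProductDistance

variable {ι : Type*} [Fintype ι] [DecidableEq ι] {A : ι → Type*}

lemma prod_update_apply (r : ∀ i, A i → ℝ) (k : ι) (u : A k → ℝ) (a : ∀ i, A i) :
    ∏ i, update r k u i (a i) = u (a k) * ∏ i ∈ {k}ᶜ, r i (a i) := by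
  rw [Fintype.prod_eq_mul_prod_compl k, update_self]
  congr 1
  refine Finset.prod_congr rfl fun i hi => ?_
  rw [update_of_ne (by simpa using hi)]

variable [∀ i, Fintype (A i)]

lemma sum_abs_prod_update_sub_prod_update (r : ∀ i, A i → ℝ) (hr0 : ∀ i b, 0 ≤ r i b)
    (hr1 : ∀ i, ∑ b, r i b = 1) (k : ι) (u v : A k → ℝ) :
    ∑ a : ∀ i, A i, |∏ i, update r k u i (a i) - ∏ i, update r k v i (a i)| =
      ∑ b, |u b - v b| := by
  have hfactor : ∀ a : ∀ i, A i, |∏ i, update r k u i (a i) - ∏ i, update r k v i (a i)| =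
      ∏ i, update r k (fun b => |u b - v b|) i (a i) := by
    intro a
    simp only [prod_update_apply, ← sub_mul, abs_mul,
      abs_of_nonneg (Finset.prod_nonneg fun i _ => hr0 i (a i))]
  simp only [hfactor, ← Fintype.prod_sum]
  rw [Fintype.prod_eq_single k fun i hi => by rw [update_of_ne hi, hr1], update_self]

lemma sum_abs_prod_sub_prod_le (p q : ∀ i, A i → ℝ)
    (hp0 : ∀ i b, 0 ≤ p i b) (hq0 : ∀ i b, 0 ≤ q i b)
    (hp1 : ∀ i, ∑ b, p i b = 1) (hq1 : ∀ i, ∑ b, q i b = 1) :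
    ∑ a : ∀ i, A i, |∏ i, p i (a i) - ∏ i, q i (a i)| ≤ ∑ i, ∑ b, |p i b - q i b| := by
  -- Replace the factors `p i` by `q i` one coordinate at a time.
  suffices hybrid : ∀ s : Finset ι, ∑ a : ∀ i, A i, |∏ i, p i (a i) - ∏ i, s.piecewise q p i (a i)| ≤
      ∑ i ∈ s, ∑ b, |p i b - q i b| by
    simpa using hybrid Finset.univ
  intro s
  induction s using Finset.induction_on with
  | empty => simp
  | @insert k s hk ih =>
    set r := s.piecewise q p
    have hr0 : ∀ i b, 0 ≤ r i b := fun i b => by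
      by_cases hi : i ∈ s <;> simp [r, hi, hp0, hq0]
    have hr1 : ∀ i, ∑ b, r i b = 1 := fun i => by
      by_cases hi : i ∈ s <;> simp [r, hi, hp1, hq1]
    have hrk : update r k (p k) = r := by
      rw [← Finset.piecewise_eq_of_notMem s q p hk, update_eq_self]
    rw [Finset.piecewise_insert, Finset.sum_insert hk]
    calc ∑ a : ∀ i, A i, |∏ i, p i (a i) - ∏ i, update r k (q k) i (a i)|
        ≤ ∑ a : ∀ i, A i, (|∏ i, p i (a i) - ∏ i, r i (a i)| +
            |∏ i, update r k (p k) i (a i) - ∏ i, update r k (q k) i (a i)|) :=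
          Finset.sum_le_sum fun a _ => by rw [hrk]; exact abs_sub_le _ _ _
      _ ≤ _ := by
          rw [Finset.sum_add_distrib, sum_abs_prod_update_sub_prod_update r hr0 hr1, add_comm]
          exact add_le_add_right ih _

end ProductDistance

namespace FH

section Simulation

variable {n : ℕ} {S : Type} {A : Fin n → Type} [∀ i, Fintype (A i)]

lemma IsPol.joint {π : ∀ i, ℕ → S → A i → ℝ} (hπ : ∀ i, IsPol (π i)) : IsPol (joint π) :=
  ⟨fun t s a => Finset.prod_nonneg fun i _ => (hπ i).1 t s (a i), fun t s => by
    simp only [FH.joint, ← Fintype.prod_sum, (hπ _).2, Finset.prod_const_one]⟩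

lemma IsPol.dev {π : ∀ i, ℕ → S → A i → ℝ} (hπ : ∀ i, IsPol (π i)) {i : Fin n}
    {σ : ℕ → S → A i → ℝ} (hσ : IsPol σ) (j : Fin n) : IsPol (dev π i σ j) := by
  rcases eq_or_ne j i with rfl | hji
  · simpa [FH.dev] using hσ
  · simpa [FH.dev, update_of_ne hji] using hπ j

variable [Fintype S] {G : Game n S A}

lemma IsGame.ν₀_nonneg (hG : IsGame G) (s : S) : 0 ≤ G.ν₀ s := hG.1 s

lemma IsGame.P_nonneg (hG : IsGame G) (s : S) (a : ∀ i, A i) (s' : S) : 0 ≤ G.P s a s' :=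
  (hG.2.2.1 s a).1 s'

lemma IsGame.sum_P (hG : IsGame G) (s : S) (a : ∀ i, A i) : ∑ s', G.P s a s' = 1 :=
  (hG.2.2.1 s a).2

lemma IsGame.abs_r_le (hG : IsGame G) (i : Fin n) (t : ℕ) (s : S) (a : ∀ i, A i) :
    |G.r i t s a| ≤ 1 :=
  hG.2.2.2 i t s a

lemma stateDist_nonneg (hG : IsGame G) {σ : ℕ → S → (∀ i, A i) → ℝ}
    (hσ : ∀ t s a, 0 ≤ σ t s a) (t : ℕ) (s : S) : 0 ≤ stateDist G σ t s := by
  induction t generalizing s with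
  | zero => exact hG.ν₀_nonneg s
  | succ t ih =>
    exact Finset.sum_nonneg fun s _ => Finset.sum_nonneg fun a _ =>
      mul_nonneg (mul_nonneg (ih s) (hσ t s a)) (hG.P_nonneg s a _)

lemma sum_stateDist_succ_mul (σ : ℕ → S → (∀ i, A i) → ℝ) (t : ℕ) (f : S → ℝ) :
    ∑ s', stateDist G σ (t + 1) s' * f s' =
      ∑ s, stateDist G σ t s * ∑ a, σ t s a * ∑ s', G.P s a s' * f s' := by
  simp only [stateDist, Finset.sum_mul, Finset.mul_sum]
  rw [Finset.sum_comm]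
  refine Finset.sum_congr rfl fun s _ => ?_
  rw [Finset.sum_comm]
  exact Finset.sum_congr rfl fun a _ => Finset.sum_congr rfl fun s' _ => by ring

lemma Vt_eq_sum_mul_Qt {t : ℕ} (ht : t < G.H) (i : Fin n) (σ : ℕ → S → (∀ i, A i) → ℝ)
    (s : S) : Vt G i σ t s = ∑ a, σ t s a * Qt G i σ t s a := by
  obtain ⟨k, hk⟩ : ∃ k, G.H - t = k + 1 := ⟨G.H - t - 1, by omega⟩
  have hk' : G.H - (t + 1) = k := by omega
  simp only [Vt, Qt, hk, hk', Vaux]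

lemma Vt_horizon (i : Fin n) (σ : ℕ → S → (∀ i, A i) → ℝ) (s : S) : Vt G i σ G.H s = 0 := by
  simp [Vt, Vaux]

lemma abs_Vaux_le (hG : IsGame G) (i : Fin n) {σ : ℕ → S → (∀ i, A i) → ℝ} (hσ : IsPol σ)
    (k t : ℕ) (s : S) : |Vaux G i σ k t s| ≤ k := by
  induction k generalizing t s with
  | zero => simp [Vaux]
  | succ k ih =>
    refine abs_sum_mul_le_of_sum_eq_one (hσ.1 t s) (hσ.2 t s) fun a => ?_
    rw [Nat.cast_succ, add_comm (k : ℝ)]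
    exact (abs_add_le _ _).trans (add_le_add (hG.abs_r_le i t s a)
      (abs_sum_mul_le_of_sum_eq_one (hG.P_nonneg s a) (hG.sum_P s a) fun s' => ih (t + 1) s'))

lemma abs_Qt_le (hG : IsGame G) (i : Fin n) {σ : ℕ → S → (∀ i, A i) → ℝ} (hσ : IsPol σ)
    {t : ℕ} (ht : t < G.H) (s : S) (a : ∀ i, A i) : |Qt G i σ t s a| ≤ G.H := by
  have hV : ∀ s', |Vt G i σ (t + 1) s'| ≤ G.H - 1 := fun s' =>
    (abs_Vaux_le hG i hσ _ _ s').trans <| by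
      rw [Nat.cast_sub ht]
      push_cast
      linarith [t.cast_nonneg (α := ℝ)]
  calc |Qt G i σ t s a| ≤ 1 + (G.H - 1) := (abs_add_le _ _).trans <| add_le_add
        (hG.abs_r_le i t s a) (abs_sum_mul_le_of_sum_eq_one (hG.P_nonneg s a) (hG.sum_P s a) hV)
    _ = G.H := by ring

lemma sum_stateDist_mul_Vt_sub_Vt {t : ℕ} (ht : t < G.H) (i : Fin n)
    (σ τ : ℕ → S → (∀ i, A i) → ℝ) :
    ∑ s, stateDist G τ t s * (Vt G i σ t s - Vt G i τ t s) =
      ∑ s, stateDist G τ t s * ∑ a, (σ t s a - τ t s a) * Qt G i σ t s a +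
        ∑ s, stateDist G τ (t + 1) s * (Vt G i σ (t + 1) s - Vt G i τ (t + 1) s) := by
  rw [sum_stateDist_succ_mul, ← Finset.sum_add_distrib]
  refine Finset.sum_congr rfl fun s _ => ?_
  have hQ : ∀ a, Qt G i σ t s a - Qt G i τ t s a =
      ∑ s', G.P s a s' * (Vt G i σ (t + 1) s' - Vt G i τ (t + 1) s') := fun a => by
    simp only [Qt, mul_sub, Finset.sum_sub_distrib, add_sub_add_left_eq_sub]
  rw [← mul_add, Vt_eq_sum_mul_Qt ht, Vt_eq_sum_mul_Qt ht]
  congr 1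
  calc ∑ a, σ t s a * Qt G i σ t s a - ∑ a, τ t s a * Qt G i τ t s a
      = ∑ a, ((σ t s a - τ t s a) * Qt G i σ t s a +
          τ t s a * (Qt G i σ t s a - Qt G i τ t s a)) := by
        rw [← Finset.sum_sub_distrib]
        exact Finset.sum_congr rfl fun a _ => by ring
    _ = _ := by simp only [Finset.sum_add_distrib, hQ]

/-- Performance difference lemma. -/
theorem value_sub_value (i : Fin n) (σ τ : ℕ → S → (∀ i, A i) → ℝ) :
    value G i σ - value G i τ = ∑ t ∈ Finset.range G.H,
      ∑ s, stateDist G τ t s * ∑ a, (σ t s a - τ t s a) * Qt G i σ t s a := by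
  set D : ℕ → ℝ := fun t => ∑ s, stateDist G τ t s * (Vt G i σ t s - Vt G i τ t s)
  have hD0 : value G i σ - value G i τ = D 0 := by
    simp only [D, value, stateDist, mul_sub, Finset.sum_sub_distrib]
  have hDH : D G.H = 0 := by simp [D, Vt_horizon]
  rw [hD0, ← sub_zero (D 0), ← hDH, ← Finset.sum_range_sub']
  refine Finset.sum_congr rfl fun t ht => ?_
  simp only [D, sum_stateDist_mul_Vt_sub_Vt (Finset.mem_range.1 ht)]
  ring

lemma abs_value_sub_le (hG : IsGame G) (i : Fin n) {σ τ : ℕ → S → (∀ i, A i) → ℝ}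
    (hσ : IsPol σ) (hτ : ∀ t s a, 0 ≤ τ t s a) :
    |value G i σ - value G i τ| ≤ G.H * ∑ t ∈ Finset.range G.H,
      ∑ s, stateDist G τ t s * ∑ a, |σ t s a - τ t s a| := by
  rw [value_sub_value, Finset.mul_sum]
  refine (Finset.abs_sum_le_sum_abs _ _).trans (Finset.sum_le_sum fun t ht => ?_)
  have hQ := abs_Qt_le hG i hσ (Finset.mem_range.1 ht)
  rw [Finset.mul_sum]
  refine (Finset.abs_sum_le_sum_abs _ _).trans (Finset.sum_le_sum fun s _ => ?_)
  have hμ := stateDist_nonneg hG hτ t s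
  rw [abs_mul, abs_of_nonneg hμ, mul_left_comm]
  refine mul_le_mul_of_nonneg_left ?_ hμ
  rw [Finset.mul_sum]
  refine (Finset.abs_sum_le_sum_abs _ _).trans (Finset.sum_le_sum fun a _ => ?_)
  rw [abs_mul, mul_comm]
  exact mul_le_mul_of_nonneg_right (hQ s a) (abs_nonneg _)

lemma bcErrT_nonneg (hG : IsGame G) {πE : ∀ i, ℕ → S → A i → ℝ} (hE : ∀ i, IsPol (πE i))
    (π : ∀ i, ℕ → S → A i → ℝ) (j : Fin n) (t : ℕ) : 0 ≤ bcErrT G πE π j t :=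
  Finset.sum_nonneg fun s _ => mul_nonneg (stateDist_nonneg hG (IsPol.joint hE).1 t s)
    (Finset.sum_nonneg fun _ _ => abs_nonneg _)

lemma bcErrT_dev_self_le (hG : IsGame G) {πE : ∀ i, ℕ → S → A i → ℝ}
    (hE : ∀ i, IsPol (πE i)) (π : ∀ i, ℕ → S → A i → ℝ) (i j : Fin n) (t : ℕ) :
    bcErrT G πE (dev π i (πE i)) j t ≤ bcErrT G πE π j t := by
  rcases eq_or_ne j i with rfl | hji
  · simpa [bcErrT, FH.dev] using bcErrT_nonneg hG hE π j t
  · simp [bcErrT, FH.dev, update_of_ne hji]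

lemma sum_stateDist_mul_sum_abs_joint_sub_le (hG : IsGame G) {πE ρ : ∀ i, ℕ → S → A i → ℝ}
    (hE : ∀ i, IsPol (πE i)) (hρ : ∀ i, IsPol (ρ i)) (t : ℕ) :
    ∑ s, stateDist G (joint πE) t s * ∑ a, |joint ρ t s a - joint πE t s a| ≤
      ∑ j, bcErrT G πE ρ j t := by
  simp only [bcErrT]
  rw [Finset.sum_comm]
  simp only [← Finset.mul_sum]
  refine Finset.sum_le_sum fun s _ => mul_le_mul_of_nonneg_left ?_
    (stateDist_nonneg hG (IsPol.joint hE).1 t s)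
  exact sum_abs_prod_sub_prod_le _ _ (fun j => (hρ j).1 t s) (fun j => (hE j).1 t s)
    (fun j => (hρ j).2 t s) (fun j => (hE j).2 t s)

lemma abs_value_joint_sub_le (hG : IsGame G) (i : Fin n) {πE ρ : ∀ i, ℕ → S → A i → ℝ}
    (hE : ∀ i, IsPol (πE i)) (hρ : ∀ i, IsPol (ρ i)) {δ : ℝ}
    (hδ : ∀ t < G.H, ∑ j, bcErrT G πE ρ j t ≤ δ) :
    |value G i (joint ρ) - value G i (joint πE)| ≤ δ * G.H ^ 2 :=
  calc |value G i (joint ρ) - value G i (joint πE)|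
      ≤ G.H * ∑ t ∈ Finset.range G.H, ∑ s, stateDist G (joint πE) t s *
          ∑ a, |joint ρ t s a - joint πE t s a| :=
        abs_value_sub_le hG i (IsPol.joint hρ) (IsPol.joint hE).1
    _ ≤ G.H * ∑ t ∈ Finset.range G.H, δ := by
        gcongr with t ht
        exact (sum_stateDist_mul_sum_abs_joint_sub_le hG hE hρ t).trans
          (hδ t (Finset.mem_range.1 ht))
    _ = δ * G.H ^ 2 := by simp only [Finset.sum_const, Finset.card_range, nsmul_eq_mul]; ring

end Simulation

/-- finite-horizon DSE bound: if `π^E` is a weak Dominant Strategy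
Equilibrium and `π` has time-uniform BC error `ε_BC`, then
`NashGap(π) ≤ 2 n ε_BC H²`. -/
theorem dse_nash_gap_finite {n : ℕ} {S : Type} {A : Fin n → Type}
    [Fintype S] [∀ i, Fintype (A i)]
    (G : Game n S A) (hG : IsGame G)
    (πE π : ∀ i, ℕ → S → A i → ℝ)
    (hE : ∀ i, IsPol (πE i)) (hπ : ∀ i, IsPol (π i))
    (hDSE : ∀ (i : Fin n) (ρ : ∀ j, ℕ → S → A j → ℝ), (∀ j, IsPol (ρ j)) →
      value G i (joint ρ) ≤ value G i (joint (dev ρ i (πE i))))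
    (εBC : ℝ) (hBC : ∀ (i : Fin n), ∀ t < G.H, bcErrT G πE π i t ≤ εBC) :
    ∀ (i : Fin n) (πi' : ℕ → S → A i → ℝ), IsPol πi' →
      value G i (joint (dev π i πi')) - value G i (joint π) ≤
        2 * n * εBC * (G.H : ℝ) ^ 2 := by
  intro i πi' hπi'
  have hdev : value G i (joint (dev π i πi')) ≤ value G i (joint (dev π i (πE i))) := by
    simpa only [dev, update_idem] using hDSE i _ (IsPol.dev hπ hπi')
  have hbc : ∀ t < G.H, ∑ j, bcErrT G πE π j t ≤ n * εBC := fun t ht =>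
    (Finset.sum_le_card_nsmul _ _ _ fun j _ => hBC j t ht).trans (by simp)
  have hπE := abs_le.1 (abs_value_joint_sub_le hG i hE hπ hbc)
  have hdevE := abs_le.1 (abs_value_joint_sub_le hG i hE (IsPol.dev hπ (hE i)) fun t ht =>
    (Finset.sum_le_sum fun j _ => bcErrT_dev_self_le hG hE π i j t).trans (hbc t ht))
  linarith

end FH
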